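/- arXiv:1406.0467 — 6 statements merged into one kernel-verified Lean document; each statement's English description precedes it below -/
import Mathlib

section
/- Let r, s be real numbers with s, r > 0, and let (x₀, y₀) be a point with x₀ > 0 and y₀ > 0 satisfying s·(x₀·y₀ − r²) = x₀²·y₀ + x₀·y₀². Then the three numbers x₀ + y₀, s − x₀, s − y₀ are positive and satisfy the strict triangle inequalities (each is less than the sum of the other two). -/
theorem cubic_point_gives_triangle (r s x₀ y₀ : ℝ)
    (hr : 0 < r) (hs : 0 < s) (hx : 0 < x₀) (hy : 0 < y₀)
    (hcurve : s * (x₀ * y₀ - r ^ 2) = x₀ ^ 2 * y₀ + x₀ * y₀ ^ 2) :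
    0 < x₀ + y₀ ∧ 0 < s - x₀ ∧ 0 < s - y₀ ∧
    x₀ + y₀ < (s - x₀) + (s - y₀) ∧
    s - x₀ < (x₀ + y₀) + (s - y₀) ∧
    s - y₀ < (x₀ + y₀) + (s - x₀) := by
  have h1 : 0 < x₀ ^ 2 * y₀ + x₀ * y₀ ^ 2 := by positivity
  have h2 : 0 < x₀ * y₀ - r ^ 2 := by
    nlinarith [mul_pos hx hy]
  have h3 : x₀ + y₀ < s := by
    nlinarith [mul_pos hx hy, mul_pos hs (by positivity : (0:ℝ) < r ^ 2)]
  refine ⟨by linarith, by linarith, by linarith, by linarith, by linarith, by linarith⟩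
end

section
/- Let m > n be relatively prime positive integers, with m even, and suppose m is not twice a perfect cube. Set r = n·(m−n) and s = m·(m+n). Then there is no rational number x satisfying s·(x² − r²) = 2·x³. -/
/-!
Put `s = m(m + n)` and `m = 2M`. Since `s` is even, `2x` is a root of the monic integer cubic
`Y³ - sY² + 4sr²`, so it is an integer, and an even one; hence `x = p ∈ ℤ` and
`M · (m + n)(p² - r²) = p³`. As `M` is prime to `m + n` and to `r`, and divides `p³`, it is prime
to the whole cofactor, so `M` is a cube and `m = 2M` is twice a cube.
-/

open Polynomial

theorem IsCoprime.sub_right_of_dvd_pow {R : Type*} [CommRing R] {a w r : R} {k : ℕ}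
    (hr : IsCoprime a r) (hw : a ∣ w ^ k) : IsCoprime a (w - r) := by
  obtain ⟨c, hc⟩ := hw
  have : IsCoprime a (w ^ k - r ^ k) := by
    simpa [hc, sub_eq_neg_add] using (hr.pow_right (n := k)).neg_right.add_mul_left_right c
  exact this.of_isCoprime_of_dvd_right (sub_dvd_pow_sub_pow w r k)

theorem Int.exists_eq_cube_of_mul_mul_sq_sub_sq_eq_cube {a c w r : ℤ} (hc : IsCoprime a c)
    (hr : IsCoprime a r) (h : a * c * (w ^ 2 - r ^ 2) = w ^ 3) : ∃ d, a = d ^ 3 := by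
  have hw : a ∣ (w ^ 2) ^ 3 := (Dvd.intro _ (by rw [← mul_assoc, h])).trans
    (pow_dvd_pow_of_dvd (dvd_pow_self w two_ne_zero) 3)
  have hsub : IsCoprime a (w ^ 2 - r ^ 2) := hr.pow_right.sub_right_of_dvd_pow hw
  exact Int.eq_pow_of_mul_eq_pow_odd_left (hc.mul_right hsub) (by decide) (by rw [← mul_assoc, h])

theorem Rat.exists_eq_intCast_of_mul_sq_sub_sq_eq_two_mul_cube {a b : ℤ} (ha : Even a) {x : ℚ}
    (h : a * (x ^ 2 - b ^ 2) = 2 * x ^ 3) : ∃ p : ℤ, x = p := by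
  have hmonic : (X ^ 3 - C a * X ^ 2 + C (4 * a * b ^ 2) : ℤ[X]).Monic := by monicity!
  obtain ⟨z, hz, -⟩ := exists_integer_of_is_root_of_monic (K := ℚ) hmonic (r := 2 * x) (by
    simp only [map_add, map_sub, map_mul, map_pow, aeval_X, aeval_C]
    simp only [algebraMap_int_eq, eq_intCast]
    push_cast
    linear_combination (-4) * h)
  simp only [algebraMap_int_eq, eq_intCast] at hz
  have hz3 : z ^ 3 = a * (z ^ 2 - 4 * b ^ 2) := by
    have : (z : ℚ) ^ 3 = a * (z ^ 2 - 4 * b ^ 2) := by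
      rw [← hz]; linear_combination (-4) * h
    exact_mod_cast this
  obtain ⟨p, rfl⟩ : Even z := (Int.even_pow.mp (hz3 ▸ ha.mul_right _)).1
  exact ⟨p, by push_cast at hz; linarith⟩

theorem no_two_torsion_even_general (m n : ℕ) (hmn : n < m)
    (hcop : Nat.Coprime m n) (hme : Even m)
    (hcube : ¬ ∃ k : ℕ, m = 2 * k ^ 3) :
    ¬ ∃ x : ℚ, (m * (m + n) : ℚ) * (x ^ 2 - (n * (m - n) : ℕ) ^ 2) = 2 * x ^ 3 := by
  rintro ⟨x, hx⟩
  set r := n * (m - n)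
  obtain ⟨M, hM⟩ := id hme
  have hMm : M ∣ m := ⟨2, by omega⟩
  have hcop_add : IsCoprime (M : ℤ) ((m + n : ℕ) : ℤ) :=
    Nat.isCoprime_iff_coprime.mpr ((Nat.coprime_self_add_right.mpr hcop).coprime_dvd_left hMm)
  have hcop_r : IsCoprime (M : ℤ) (r : ℤ) := Nat.isCoprime_iff_coprime.mpr
    ((hcop.mul_right ((Nat.coprime_self_sub_right hmn.le).mpr hcop)).coprime_dvd_left hMm)
  obtain ⟨p, rfl⟩ := Rat.exists_eq_intCast_of_mul_sq_sub_sq_eq_two_mul_cube (a := m * (m + n))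
    (b := r) (by exact_mod_cast hme.mul_right (m + n)) (by exact_mod_cast hx)
  have hp : (M : ℤ) * ((m + n : ℕ) : ℤ) * (p ^ 2 - (r : ℤ) ^ 2) = p ^ 3 := by
    have hs : ((m : ℤ) * (m + n)) * (p ^ 2 - (r : ℤ) ^ 2) = 2 * p ^ 3 := by exact_mod_cast hx
    have hm : (m : ℤ) = 2 * M := by omega
    refine mul_left_cancel₀ two_ne_zero ?_
    rw [Nat.cast_add]
    linear_combination hs - (m + n) * (p ^ 2 - (r : ℤ) ^ 2) * hm
  obtain ⟨d, hd⟩ := Int.exists_eq_cube_of_mul_mul_sq_sub_sq_eq_cube hcop_add hcop_r hp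
  exact hcube ⟨d.natAbs, by rw [hM, ← Int.natAbs_pow, ← hd]; omega⟩

theorem no_two_torsion_even (m n : ℕ) (hmn : n < m) (hn : 0 < n)
    (hcop : Nat.Coprime m n) (hme : Even m)
    (hcube : ¬ ∃ k : ℕ, m = 2 * k ^ 3) :
    ¬ ∃ x : ℚ, (m * (m + n) : ℚ) * (x ^ 2 - (n * (m - n) : ℕ) ^ 2) = 2 * x ^ 3 :=
  no_two_torsion_even_general m n hmn hcop hme hcube
end

section
/- Let m > n be relatively prime positive integers with m odd, and suppose m is not a perfect cube. Set r = n·(m−n) and s = m·(m+n). Then there is no rational number x satisfying s·(x² − r²) = 2·x³. -/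
/-!
Write `x = a / b` in lowest terms, so that `2 a³ = m · (m + n) b (a² - r² b²)`. Since `m` is odd,
`m ∣ a³`; hence `m` is prime to `b`, and, being prime to `r`, also to `a² - r² b²`. Thus
`(2a)³ = m · 4 (m + n) b (a² - r² b²)` with coprime factors, and `m` is a cube.
-/

theorem IsCoprime.sub_of_dvd_pow {R : Type*} [CommRing R] {m x y : R} {k : ℕ}
    (hx : m ∣ x ^ k) (hy : IsCoprime m y) : IsCoprime m (x - y) := by
  obtain ⟨q, hq⟩ := sub_dvd_pow_sub_pow x y k
  obtain ⟨u, hu⟩ := hx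
  have hyk : y ^ k = m * u + (x - y) * -q := by linear_combination hu - hq
  have : IsCoprime m ((x - y) * -q) := by
    rw [← IsCoprime.add_mul_left_right_iff (z := u), add_comm, ← hyk]
    exact hy.pow_right
  exact this.of_mul_right_left

theorem Int.exists_cube_eq_of_two_mul_cube_eq_mul {m e a : ℤ} (hm : Odd m) (hme : IsCoprime m e)
    (h : 2 * a ^ 3 = m * e) : ∃ d, m = d ^ 3 :=
  Int.eq_pow_of_mul_eq_pow_odd_left (c := 2 * a) (hk := by decide)
    ((Int.isCoprime_two_right.mpr hm).pow_right (n := 2) |>.mul_right hme)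
    (by linear_combination -4 * h)

theorem Rat.two_mul_num_cube_eq_of_mul_sq_sub_sq_eq {s r : ℤ} {x : ℚ}
    (h : (s : ℚ) * (x ^ 2 - r ^ 2) = 2 * x ^ 3) :
    2 * x.num ^ 3 = s * x.den * (x.num ^ 2 - r ^ 2 * x.den ^ 2) := by
  have hden : (x.den : ℚ) ≠ 0 := by positivity
  rw [← Rat.num_div_den x] at h
  field_simp at h
  have h' : ((2 * x.num ^ 3 : ℤ) : ℚ) = ((s * x.den * (x.num ^ 2 - r ^ 2 * x.den ^ 2) : ℤ) : ℚ) := by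
    push_cast
    linear_combination -h
  exact_mod_cast h'

theorem no_two_torsion_odd_general (m n : ℕ) (hmn : n < m)
    (hcop : Nat.Coprime m n) (hmo : Odd m)
    (hcube : ¬ ∃ k : ℕ, m = k ^ 3) :
    ¬ ∃ x : ℚ, (m * (m + n) : ℚ) * (x ^ 2 - (n * (m - n) : ℕ) ^ 2) = 2 * x ^ 3 := by
  rintro ⟨x, hx⟩
  set r : ℤ := ((n * (m - n) : ℕ) : ℤ)
  set a := x.num
  set b : ℤ := (x.den : ℤ)
  have key : 2 * a ^ 3 = m * ((m + n) * b * (a ^ 2 - r ^ 2 * b ^ 2)) := by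
    rw [Rat.two_mul_num_cube_eq_of_mul_sq_sub_sq_eq (s := m * (m + n)) (r := r)
      (by push_cast [r] at hx ⊢; exact hx)]
    ring
  have hm2 : IsCoprime (m : ℤ) 2 := Int.isCoprime_two_right.mpr (by exact_mod_cast hmo)
  have hm_add : IsCoprime (m : ℤ) (m + n) := by
    exact_mod_cast Nat.isCoprime_iff_coprime.mpr (Nat.coprime_self_add_right.mpr hcop)
  have hmr : IsCoprime (m : ℤ) r := Nat.isCoprime_iff_coprime.mpr <|
    hcop.mul_right ((Nat.coprime_self_sub_right hmn.le).mpr hcop)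
  have hma : (m : ℤ) ∣ a ^ 3 := hm2.dvd_of_dvd_mul_left ⟨_, key⟩
  have hmb : IsCoprime (m : ℤ) b := x.isCoprime_num_den.pow_left.of_isCoprime_of_dvd_left hma
  have hmD : IsCoprime (m : ℤ) (a ^ 2 - r ^ 2 * b ^ 2) := by
    rw [← mul_pow]
    exact IsCoprime.sub_of_dvd_pow (k := 3) (hma.trans ⟨a ^ 3, by ring⟩) (hmr.mul_right hmb).pow_right
  obtain ⟨d, hd⟩ := Int.exists_cube_eq_of_two_mul_cube_eq_mul (by exact_mod_cast hmo)
    ((hm_add.mul_right hmb).mul_right hmD) key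
  exact hcube ⟨d.natAbs, by simpa [Int.natAbs_pow] using congrArg Int.natAbs hd⟩

theorem no_two_torsion_odd (m n : ℕ) (hmn : n < m) (hn : 0 < n)
    (hcop : Nat.Coprime m n) (hmo : Odd m)
    (hcube : ¬ ∃ k : ℕ, m = k ^ 3) :
    ¬ ∃ x : ℚ, (m * (m + n) : ℚ) * (x ^ 2 - (n * (m - n) : ℕ) ^ 2) = 2 * x ^ 3 :=
  no_two_torsion_odd_general m n hmn hcop hmo hcube
end

section
/- The rational triangle with side lengths 101/21, 156/35, 41/15 has semiperimeter 6 and satisfies (s−ℓ₁)(s−ℓ₂)(s−ℓ₃)/s = 1, hence has the same perimeter (12) and area (6) as the (3,4,5) right triangle, while not being congruent to it. -/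
theorem same_perimeter_and_area :
    let l₁ : ℚ := 101 / 21
    let l₂ : ℚ := 156 / 35
    let l₃ : ℚ := 41 / 15
    let s : ℚ := (l₁ + l₂ + l₃) / 2
    s = 6 ∧ (s - l₁) * (s - l₂) * (s - l₃) / s = 1 ∧
    ({l₁, l₂, l₃} : Multiset ℚ) ≠ ({3, 4, 5} : Multiset ℚ) := by
  refine ⟨by norm_num, by norm_num, ?_⟩
  intro h
  have : (3 : ℚ) ∈ ({101/21, 156/35, 41/15} : Multiset ℚ) := by rw [h]; simp
  simp at this
  norm_num at this
end

section
/- Let ρ, ã, b̃ be real numbers with ã·b̃ ≠ ρ², and set c̃ = ρ²·(ã + b̃)/(ã·b̃ − ρ²). Suppose the denominator 1 + ã·b̃ + b̃·c̃ + c̃·ã is nonzero and define σ = (ã + b̃ + c̃ + ã·b̃·c̃)/(1 + ã·b̃ + b̃·c̃ + c̃·ã). Then σ·(ã²·b̃² + ã·b̃ + ρ²·(ã² + ã·b̃ + b̃² − 1)) = (1 + ρ²)·(ã²·b̃ + ã·b̃²). -/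
theorem quartic_curve_equation (ρ a b : ℝ) (hab : a * b ≠ ρ ^ 2)
    (c σ : ℝ) (hc : c = ρ ^ 2 * (a + b) / (a * b - ρ ^ 2))
    (hden : 1 + a * b + b * c + c * a ≠ 0)
    (hσ : σ = (a + b + c + a * b * c) / (1 + a * b + b * c + c * a)) :
    σ * (a ^ 2 * b ^ 2 + a * b + ρ ^ 2 * (a ^ 2 + a * b + b ^ 2 - 1)) =
      (1 + ρ ^ 2) * (a ^ 2 * b + a * b ^ 2) := by
  have h1 : a * b - ρ ^ 2 ≠ 0 := sub_ne_zero.mpr hab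
  
  rw [hσ, div_mul_eq_mul_div, div_eq_iff hden, hc]
  field_simp
  ring
end

section
/- Let ρ > 0, σ ∈ (0,1) be real numbers and (x₀, y₀) a point with 0 < x₀ < 1, 0 < y₀ < 1 on the quartic σ(x²y² + xy + ρ²(x² + xy + y² − 1)) = (1+ρ²)(x²y + xy²). Set s = artanh(σ). Then the three positive real numbers artanh(x₀) + artanh(y₀), s − artanh(x₀), s − artanh(y₀) satisfy the strict triangle inequalities. -/
/-- The inverse hyperbolic tangent on (-1, 1). -/
noncomputable def artanh (x : ℝ) : ℝ := Real.log ((1 + x) / (1 - x)) / 2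

lemma artanh_lt_artanh {a b : ℝ} (ha : -1 < a) (hab : a < b) (hb : b < 1) :
    artanh a < artanh b := by
  unfold artanh
  have h1a : 0 < 1 + a := by linarith
  have h1a' : 0 < 1 - a := by linarith
  have h1b : 0 < 1 + b := by linarith
  have h1b' : 0 < 1 - b := by linarith
  have hfa : 0 < (1 + a) / (1 - a) := by positivity
  have hlt : (1 + a) / (1 - a) < (1 + b) / (1 - b) := by
    rw [div_lt_div_iff₀ h1a' h1b']; nlinarith
  have := Real.log_lt_log hfa hlt
  linarith

lemma artanh_zero : artanh 0 = 0 := by simp [artanh]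

lemma artanh_pos {x : ℝ} (h0 : 0 < x) (h1 : x < 1) : 0 < artanh x := by
  have := artanh_lt_artanh (a := 0) (b := x) (by norm_num) h0 h1
  rwa [artanh_zero] at this

lemma artanh_add {x y : ℝ} (hx : 0 < x) (hx' : x < 1) (hy : 0 < y) (hy' : y < 1) :
    artanh x + artanh y = artanh ((x + y) / (1 + x * y)) := by
  unfold artanh
  have hd : (0:ℝ) < 1 + x * y := by nlinarith
  have h1 : (1 + (x + y) / (1 + x * y)) = (1 + x) * (1 + y) / (1 + x * y) := by
    field_simp; ring
  have h2 : (1 - (x + y) / (1 + x * y)) = (1 - x) * (1 - y) / (1 + x * y) := by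
    field_simp; ring
  rw [h1, h2]
  have h3 : (1 + x) * (1 + y) / (1 + x * y) / ((1 - x) * (1 - y) / (1 + x * y))
      = (1 + x) / (1 - x) * ((1 + y) / (1 - y)) := by
    field_simp
  have p1 : (0:ℝ) < (1 + x) / (1 - x) := div_pos (by linarith) (by linarith)
  have p2 : (0:ℝ) < (1 + y) / (1 - y) := div_pos (by linarith) (by linarith)
  rw [h3, Real.log_mul (ne_of_gt p1) (ne_of_gt p2)]
  ring

theorem quartic_point_gives_hyperbolic_triangle (ρ σ x₀ y₀ : ℝ) (hρ : 0 < ρ)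
    (hσ : 0 < σ) (hσ' : σ < 1)
    (hx : 0 < x₀) (hx' : x₀ < 1) (hy : 0 < y₀) (hy' : y₀ < 1)
    (hcurve : σ * (x₀ ^ 2 * y₀ ^ 2 + x₀ * y₀ + ρ ^ 2 * (x₀ ^ 2 + x₀ * y₀ + y₀ ^ 2 - 1)) =
      (1 + ρ ^ 2) * (x₀ ^ 2 * y₀ + x₀ * y₀ ^ 2)) :
    let s := artanh σ
    0 < artanh x₀ + artanh y₀ ∧ 0 < s - artanh x₀ ∧ 0 < s - artanh y₀ ∧
    artanh x₀ + artanh y₀ < (s - artanh x₀) + (s - artanh y₀) ∧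
    s - artanh x₀ < (artanh x₀ + artanh y₀) + (s - artanh y₀) ∧
    s - artanh y₀ < (artanh x₀ + artanh y₀) + (s - artanh x₀) := by
  intro s
  have hxy1 : (0:ℝ) < 1 + x₀ * y₀ := by nlinarith
  have hρ2 : (0:ℝ) < ρ ^ 2 := by positivity
  have key : x₀ + y₀ < σ * (1 + x₀ * y₀) := by
    by_contra h
    push_neg at h
    rcases le_or_gt (x₀ ^ 2 + x₀ * y₀ + y₀ ^ 2) 1 with hc | hc
    · nlinarith [mul_pos hx hy, mul_nonneg (mul_nonneg hρ2.le hσ.le)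
        (by linarith : (0:ℝ) ≤ 1 - (x₀ ^ 2 + x₀ * y₀ + y₀ ^ 2)),
        mul_pos (mul_pos hρ2 (mul_pos hx hy)) (add_pos hx hy),
        mul_nonneg (mul_pos hx hy).le (by linarith : (0:ℝ) ≤ x₀ + y₀ - σ * (1 + x₀ * y₀))]
    · nlinarith [mul_pos hx hy,
        mul_nonneg hρ2.le (mul_nonneg
          (by linarith : (0:ℝ) ≤ x₀ + y₀ - σ * (1 + x₀ * y₀))
          (by linarith : (0:ℝ) ≤ x₀ ^ 2 + x₀ * y₀ + y₀ ^ 2 - 1)),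
        mul_pos (mul_pos hρ2 (add_pos hx hy))
          (mul_pos (by nlinarith : (0:ℝ) < 1 - x₀ ^ 2) (by nlinarith : (0:ℝ) < 1 - y₀ ^ 2)),
        mul_nonneg (mul_nonneg (mul_pos hx hy).le hxy1.le)
          (by linarith : (0:ℝ) ≤ x₀ + y₀ - σ * (1 + x₀ * y₀))]
  set t : ℝ := (x₀ + y₀) / (1 + x₀ * y₀) with ht
  have ht0 : 0 < t := div_pos (by linarith) hxy1
  have ht1 : t < σ := (div_lt_iff₀ hxy1).mpr (by linarith)
  have ha := artanh_pos hx hx'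
  have hb := artanh_pos hy hy'
  have hsum : artanh x₀ + artanh y₀ = artanh t := artanh_add hx hx' hy hy'
  have hlt : artanh t < artanh σ := artanh_lt_artanh (by linarith) ht1 hσ'
  have hs : artanh x₀ + artanh y₀ < s := by rw [hsum]; exact hlt
  refine ⟨by linarith, by linarith, by linarith, by linarith, by linarith, by linarith⟩
end
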